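/- arXiv:1104.4279 — 7 statements merged into one kernel-verified Lean document; each statement's English description precedes it below -/
import Mathlib

section
/- If x is a weakly simplicial variable of a CNF formula F, then every x-resolvent of two clauses of F is contained in F − x, where F − x is obtained from F by removing the literals x and ¬x from every clause; consequently |DP_x(F)| ≤ |F|. -/
open Finset

def negLit {V : Type} (l : V × Bool) : V × Bool := (l.1, !l.2)

abbrev Clause (V : Type) := Finset (V × Bool)
abbrev CNF (V : Type) := Finset (Finset (V × Bool))

variable {V : Type} [DecidableEq V]

def clauseVars (C : Clause V) : Finset V := C.image Prod.fst

def fvars (F : CNF V) : Finset V := F.sup clauseVars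

def varOccurs (x : V) (C : Clause V) : Prop := (x, true) ∈ C ∨ (x, false) ∈ C

def NonTaut (C : Clause V) : Prop := ∀ l ∈ C, negLit l ∉ C

def satClause (τ : V → Bool) (C : Clause V) : Prop := ∃ l ∈ C, τ l.1 = l.2

def satCNF (τ : V → Bool) (F : CNF V) : Prop := ∀ C ∈ F, satClause τ C

def Satisfiable (F : CNF V) : Prop := ∃ τ, satCNF τ F

/-- `R` is the `x`-resolvent of `C` and `D` (with `x` occurring positively in `C`). -/
def IsResolventOn (x : V) (C D R : Clause V) : Prop :=
  C ∩ D.image negLit = {(x, true)} ∧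
    R = (C ∪ D) \ ({(x, true), (x, false)} : Clause V)

/-- Davis-Putnam elimination of variable `x`: add all `x`-resolvents and remove
all clauses in which `x` occurs. -/
def DP (x : V) (F : CNF V) : CNF V :=
  (((F ×ˢ F).filter fun p => p.1 ∩ p.2.image negLit = {(x, true)}).image
      fun p => (p.1 ∪ p.2) \ ({(x, true), (x, false)} : Clause V)) ∪
    F.filter fun C => (x, true) ∉ C ∧ (x, false) ∉ C

def DPSeq : List V → CNF V → CNF V
  | [], F => F
  | x :: xs, F => DPSeq xs (DP x F)

def DPSimplicial (x : V) (F : CNF V) : Prop :=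
  ∀ C ∈ F, ∀ D ∈ F, ∀ R : Clause V, IsResolventOn x C D R → R ⊆ C ∨ R ⊆ D

def WeaklySimplicialVar (x : V) (F : CNF V) : Prop :=
  ∀ C ∈ F, ∀ D ∈ F, varOccurs x C → varOccurs x D →
    clauseVars C ⊆ clauseVars D ∨ clauseVars D ⊆ clauseVars C

def IsDPSElim : List V → CNF V → Prop
  | [], _ => True
  | x :: xs, F => DPSimplicial x F ∧ IsDPSElim xs (DP x F)

def IsWSElim : List V → CNF V → Prop
  | [], _ => True
  | x :: xs, F => WeaklySimplicialVar x F ∧ IsWSElim xs (DP x F)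

def HasDPSElimOrdering (F : CNF V) : Prop :=
  ∃ l : List V, l.toFinset = fvars F ∧ IsDPSElim l F

def HasWSElimOrdering (F : CNF V) : Prop :=
  ∃ l : List V, l.toFinset = fvars F ∧ IsWSElim l F

/-- `F − B`: remove all literals over variables in `B` from all clauses. -/
def minusVars (F : CNF V) (B : Finset V) : CNF V :=
  F.image fun C => C.filter fun l => l.1 ∉ B

/-- `F[τ]` for the partial assignment given by restricting `τ` to `B`:
remove satisfied clauses and delete falsified literals. -/
def reduct (F : CNF V) (B : Finset V) (τ : V → Bool) : CNF V :=
  (F.filter fun C => ∀ l ∈ C, l.1 ∈ B → τ l.1 ≠ l.2).image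
    fun C => C.filter fun l => l.1 ∉ B




lemma noClash {V : Type} [DecidableEq V] {C D : Clause V} {x v : V} {b : Bool}
    (hint : C ∩ D.image negLit = {(x, true)}) (hv : v ≠ x)
    (hC : (v, b) ∈ C) (hD : (v, !b) ∈ D) : False := by
  have : (v, b) ∈ C ∩ D.image negLit := by
    refine Finset.mem_inter.mpr ⟨hC, Finset.mem_image.mpr ⟨(v, !b), hD, ?_⟩⟩
    simp [negLit]
  rw [hint] at this
  exact hv (by simpa using congrArg Prod.fst (Finset.mem_singleton.mp this))

lemma resolvent_eq {V : Type} [DecidableEq V] {C D E : Clause V} {x : V}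
    (hmemE : ∀ v : V, ∀ b : Bool, v ≠ x → (v, b) ∈ C ∪ D → (v, b) ∈ E)
    (hEsub : E ⊆ C ∪ D) :
    (C ∪ D) \ ({(x, true), (x, false)} : Clause V) =
      E.filter fun l => l.1 ∉ ({x} : Finset V) := by
  ext ⟨v, b⟩
  simp only [Finset.mem_sdiff, Finset.mem_insert, Finset.mem_singleton,
    Finset.mem_filter, Prod.mk.injEq]
  constructor
  · rintro ⟨hmem, hne⟩
    have hv : v ≠ x := by
      intro hvx; subst hvx
      cases b <;> simp_all
    exact ⟨hmemE v b hv hmem, hv⟩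
  · rintro ⟨hE, hv⟩
    refine ⟨hEsub hE, ?_⟩
    rintro (⟨rfl, _⟩ | ⟨rfl, _⟩) <;> exact hv rfl

/-- if `x` is weakly simplicial in `F`, then every `x`-resolvent of two
clauses of `F` belongs to `F − x`, and `|DP_x(F)| ≤ |F|`. -/
theorem weaklySimplicial_resolvents_subsumed {V : Type} [DecidableEq V]
    (F : CNF V) (x : V) (h : WeaklySimplicialVar x F) :
    (∀ C ∈ F, ∀ D ∈ F, ∀ R : Clause V, IsResolventOn x C D R → R ∈ minusVars F {x}) ∧
      (DP x F).card ≤ F.card := by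
  have key : ∀ C ∈ F, ∀ D ∈ F, ∀ R : Clause V, IsResolventOn x C D R → R ∈ minusVars F {x} := by
    intro C hC D hD R hR
    obtain ⟨hint, rfl⟩ := hR
    have hxC : (x, true) ∈ C := by
      have : (x, true) ∈ C ∩ D.image negLit := by rw [hint]; simp
      exact (Finset.mem_inter.mp this).1
    have hxD : (x, false) ∈ D := by
      have h1 : (x, true) ∈ D.image negLit := by
        have : (x, true) ∈ C ∩ D.image negLit := by rw [hint]; simp
        exact (Finset.mem_inter.mp this).2
      obtain ⟨⟨v, b⟩, hl, hll⟩ := Finset.mem_image.mp h1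
      have hvb : v = x ∧ b = false := by
        simp only [negLit, Prod.mk.injEq] at hll
        exact ⟨hll.1, by cases b <;> simp_all⟩
      obtain ⟨rfl, rfl⟩ := hvb
      exact hl
    rcases h C hC D hD (Or.inl hxC) (Or.inr hxD) with hs | hs
    · -- vars C ⊆ vars D, resolvent equals D minus x
      refine Finset.mem_image.mpr ⟨D, hD, ?_⟩
      refine (resolvent_eq ?_ fun l hl => Finset.mem_union_right _ hl).symm
      intro v b hv hm
      rcases Finset.mem_union.mp hm with hm | hm
      · have hvD : v ∈ clauseVars D := hs (Finset.mem_image.mpr ⟨(v, b), hm, rfl⟩)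
        obtain ⟨⟨v', b'⟩, hlD, hveq⟩ := Finset.mem_image.mp hvD
        simp only at hveq; subst hveq
        by_cases hb : b' = b
        · subst hb; exact hlD
        · exact absurd (noClash hint hv hm (by
            have : b' = !b := by cases b <;> cases b' <;> simp_all
            rwa [this] at hlD)) (not_false)
      · exact hm
    · -- vars D ⊆ vars C, resolvent equals C minus x
      refine Finset.mem_image.mpr ⟨C, hC, ?_⟩
      refine (resolvent_eq ?_ fun l hl => Finset.mem_union_left _ hl).symm
      intro v b hv hm
      rcases Finset.mem_union.mp hm with hm | hm
      · exact hm
      · have hvC : v ∈ clauseVars C := hs (Finset.mem_image.mpr ⟨(v, b), hm, rfl⟩)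
        obtain ⟨⟨v', b'⟩, hlC, hveq⟩ := Finset.mem_image.mp hvC
        simp only at hveq; subst hveq
        by_cases hb : b' = b
        · subst hb; exact hlC
        · exfalso
          have hb' : b' = !b := by cases b <;> cases b' <;> simp_all
          subst hb'
          exact noClash hint hv hlC (by simpa using hm)
  refine ⟨key, ?_⟩
  have hsub : DP x F ⊆ minusVars F {x} := by
    intro R hR
    rcases Finset.mem_union.mp hR with hR | hR
    · obtain ⟨⟨C, D⟩, hp, rfl⟩ := Finset.mem_image.mp hR
      obtain ⟨hmem, hcond⟩ := Finset.mem_filter.mp hp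
      obtain ⟨hC, hD⟩ := Finset.mem_product.mp hmem
      exact key C hC D hD _ ⟨hcond, rfl⟩
    · obtain ⟨hCF, hx1, hx2⟩ := Finset.mem_filter.mp hR
      refine Finset.mem_image.mpr ⟨R, hCF, ?_⟩
      refine Finset.filter_true_of_mem ?_
      rintro ⟨v, b⟩ hl
      simp only [Finset.mem_singleton]
      rintro rfl
      cases b
      · exact hx2 hl
      · exact hx1 hl
  calc (DP x F).card ≤ (minusVars F {x}).card := Finset.card_le_card hsub
    _ ≤ F.card := Finset.card_image_le
end

section
/- If x is a DP-simplicial variable of a CNF formula F, then |DP_x(F)| ≤ |F|. -/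
open Finset

variable {V : Type} [DecidableEq V]

/-- if `x` is DP-simplicial in `F`, then `|DP_x(F)| ≤ |F|`. -/
theorem dpSimplicial_card_le {V : Type} [DecidableEq V]
    (F : CNF V) (x : V) (h : DPSimplicial x F) :
    (DP x F).card ≤ F.card := by
  have hsub : DP x F ⊆ F.image fun C => C \ ({(x, true), (x, false)} : Clause V) := by
    intro R hR
    rcases Finset.mem_union.mp hR with hR | hR
    · obtain ⟨p, hp, rfl⟩ := Finset.mem_image.mp hR
      rw [Finset.mem_filter, Finset.mem_product] at hp
      obtain ⟨⟨h1, h2⟩, hcond⟩ := hp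
      have hres : IsResolventOn x p.1 p.2 ((p.1 ∪ p.2) \ ({(x, true), (x, false)} : Clause V)) :=
        ⟨hcond, rfl⟩
      rcases h p.1 h1 p.2 h2 _ hres with hc | hc
      · refine Finset.mem_image.mpr ⟨p.1, h1, ?_⟩
        apply subset_antisymm
        · exact Finset.sdiff_subset_sdiff Finset.subset_union_left (le_refl _)
        · intro l hl
          exact Finset.mem_sdiff.mpr ⟨hc hl, (Finset.mem_sdiff.mp hl).2⟩
      · refine Finset.mem_image.mpr ⟨p.2, h2, ?_⟩
        apply subset_antisymm
        · exact Finset.sdiff_subset_sdiff Finset.subset_union_right (le_refl _)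
        · intro l hl
          exact Finset.mem_sdiff.mpr ⟨hc hl, (Finset.mem_sdiff.mp hl).2⟩
    · rw [Finset.mem_filter] at hR
      obtain ⟨hF, hx1, hx2⟩ := hR
      refine Finset.mem_image.mpr ⟨R, hF, ?_⟩
      apply subset_antisymm
      · exact Finset.sdiff_subset
      · intro l hl
        refine Finset.mem_sdiff.mpr ⟨hl, ?_⟩
        simp only [Finset.mem_insert, Finset.mem_singleton]
        rintro (rfl | rfl)
        · exact hx1 hl
        · exact hx2 hl
  exact le_trans (Finset.card_le_card hsub) Finset.card_image_le
end

section
/- Every weakly simplicial variable of a CNF formula is DP-simplicial. -/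
open Finset

variable {V : Type} [DecidableEq V]

/-- every weakly simplicial variable of a CNF formula is DP-simplicial. -/
theorem weaklySimplicial_dpSimplicial {V : Type} [DecidableEq V]
    (F : CNF V) (x : V) (h : WeaklySimplicialVar x F) :
    DPSimplicial x F := by
  intro C hC D hD R ⟨hres, hR⟩
  have hxt : (x, true) ∈ C ∩ D.image negLit := by rw [hres]; simp
  have hxC : (x, true) ∈ C := (Finset.mem_inter.1 hxt).1
  have hxD : (x, false) ∈ D := by
    obtain ⟨d, hd, hde⟩ := Finset.mem_image.1 (Finset.mem_inter.1 hxt).2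
    have : d = (x, false) := by
      cases d with
      | mk v b =>
        simp [negLit] at hde
        obtain ⟨h1, h2⟩ := hde
        simp [h1, Bool.not_eq_true', ← h2]
    rwa [this] at hd
  have key : ∀ l : V × Bool, l ∈ C → negLit l ∈ D → l = (x, true) := by
    intro l hlC hlD
    have : negLit (negLit l) ∈ C ∩ D.image negLit := by
      refine Finset.mem_inter.2 ⟨?_, Finset.mem_image_of_mem _ hlD⟩
      simpa [negLit] using hlC
    rw [hres] at this
    simpa [negLit] using this
  rcases h C hC D hD (Or.inl hxC) (Or.inr hxD) with hsub | hsub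
  · -- clauseVars C ⊆ clauseVars D : show R ⊆ D
    right
    intro l hlR
    rw [hR] at hlR
    obtain ⟨hlCD, hlx⟩ := Finset.mem_sdiff.1 hlR
    simp only [Finset.mem_insert, Finset.mem_singleton] at hlx
    push_neg at hlx
    rcases Finset.mem_union.1 hlCD with hl | hl
    · have hlxvar : l.1 ≠ x := by
        intro hv
        cases l with
        | mk v b =>
          cases b
          · exact hlx.2 (by simp_all)
          · exact hlx.1 (by simp_all)
      have : l.1 ∈ clauseVars D := hsub (Finset.mem_image_of_mem _ hl)
      obtain ⟨m, hmD, hm1⟩ := Finset.mem_image.1 this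
      by_cases hb : m.2 = l.2
      · have : m = l := Prod.ext hm1 hb
        rwa [this] at hmD
      · have hneg : negLit l ∈ D := by
          have : m = negLit l := by
            refine Prod.ext (by simpa [negLit]) ?_
            simp only [negLit]
            revert hb; cases m.2 <;> cases l.2 <;> simp
          rwa [this] at hmD
        exact absurd (key l hl hneg) (by intro he; exact hlxvar (by rw [he]))
    · exact hl
  · -- clauseVars D ⊆ clauseVars C : show R ⊆ C
    left
    intro l hlR
    rw [hR] at hlR
    obtain ⟨hlCD, hlx⟩ := Finset.mem_sdiff.1 hlR
    simp only [Finset.mem_insert, Finset.mem_singleton] at hlx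
    push_neg at hlx
    rcases Finset.mem_union.1 hlCD with hl | hl
    · exact hl
    · have hlxvar : l.1 ≠ x := by
        intro hv
        cases l with
        | mk v b =>
          cases b
          · exact hlx.2 (by simp_all)
          · exact hlx.1 (by simp_all)
      have : l.1 ∈ clauseVars C := hsub (Finset.mem_image_of_mem _ hl)
      obtain ⟨m, hmC, hm1⟩ := Finset.mem_image.1 this
      by_cases hb : m.2 = l.2
      · have : m = l := Prod.ext hm1 hb
        rwa [this] at hmC
      · have hmneg : negLit m ∈ D := by
          have : negLit m = l := by
            refine Prod.ext (by simpa [negLit]) ?_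
            simp only [negLit]
            revert hb; cases m.2 <;> cases l.2 <;> simp
          rwa [this]
        exact absurd (key m hmC hmneg)
          (by intro he; exact hlxvar (by rw [← hm1, he]))
end

section
/- Every β-acyclic CNF formula admits a weakly simplicial elimination ordering of its variables, i.e., its hypergraph can be reduced to the empty hypergraph by repeatedly deleting weakly simplicial vertices. -/
open Finset

variable {V : Type} [DecidableEq V]

/-- α-acyclicity via the reduction rules: remove a hyperedge that is empty or
contained in another hyperedge; remove a vertex occurring in at most one hyperedge. -/
inductive AlphaAcyclic {V : Type} [DecidableEq V] : Finset (Finset V) → Prop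
  | empty : AlphaAcyclic (∅ : Finset (Finset V))
  | removeEdge (H : Finset (Finset V)) (e : Finset V) (he : e ∈ H)
      (hcov : e = ∅ ∨ ∃ f ∈ H, f ≠ e ∧ e ⊆ f)
      (h : AlphaAcyclic (H.erase e)) : AlphaAcyclic H
  | removeVertex (H : Finset (Finset V)) (v : V)
      (hv : (H.filter fun e => v ∈ e).card ≤ 1)
      (h : AlphaAcyclic (H.image fun e => e.erase v)) : AlphaAcyclic H

/-- A hypergraph (given by its finite family of hyperedges) is β-acyclic if
every partial hypergraph is α-acyclic. -/
def BetaAcyclic {V : Type} [DecidableEq V] (H : Finset (Finset V)) : Prop :=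
  ∀ H' ⊆ H, AlphaAcyclic H'

def hypergraphOf {V : Type} [DecidableEq V] (F : CNF V) : Finset (Finset V) :=
  F.image clauseVars

/-- A vertex of a hypergraph is weakly simplicial if the hyperedges containing it
form a chain under inclusion (its neighbourhood in the bipartite incidence graph
is automatically independent). -/
def wsVertex {V : Type} [DecidableEq V] (v : V) (H : Finset (Finset V)) : Prop :=
  ∀ e ∈ H, ∀ f ∈ H, v ∈ e → v ∈ f → e ⊆ f ∨ f ⊆ e

/-- The hypergraph can be reduced to the empty hypergraph by repeatedly deleting
weakly simplicial vertices. -/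
inductive WSReducible {V : Type} [DecidableEq V] : Finset (Finset V) → Prop
  | base (H : Finset (Finset V)) (h : ∀ e ∈ H, e = ∅) : WSReducible H
  | step (H : Finset (Finset V)) (v : V) (hv : v ∈ H.sup id) (hws : wsVertex v H)
      (h : WSReducible (H.image fun e => e.erase v)) : WSReducible H

/-- The incidence graph of a hypergraph: bipartite graph on vertices and hyperedges. -/
def incidenceGraph {V : Type} [DecidableEq V] (H : Finset (Finset V)) :
    SimpleGraph (V ⊕ Finset V) where
  Adj a b := ∃ v e, e ∈ H ∧ v ∈ e ∧
    ((a = Sum.inl v ∧ b = Sum.inr e) ∨ (a = Sum.inr e ∧ b = Sum.inl v))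
  symm := by
    constructor
    rintro a b ⟨v, e, he, hv, h | h⟩
    · exact ⟨v, e, he, hv, Or.inr ⟨h.2, h.1⟩⟩
    · exact ⟨v, e, he, hv, Or.inl ⟨h.2, h.1⟩⟩
  loopless := by
    constructor
    rintro a ⟨v, e, he, hv, ⟨h1, h2⟩ | ⟨h1, h2⟩⟩ <;> subst h1 <;> simp_all

/-- `G` has an induced cycle on `n` vertices. -/
def HasInducedCycleOn {α : Type} (G : SimpleGraph α) (n : ℕ) : Prop :=
  ∃ f : ZMod n → α, Function.Injective f ∧
    ∀ i j : ZMod n, G.Adj (f i) (f j) ↔ (j = i + 1 ∨ i = j + 1)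

/-- No induced cycle on 6 or more vertices. -/
def NoLongInducedCycle {α : Type} (G : SimpleGraph α) : Prop :=
  ∀ n : ℕ, 6 ≤ n → ¬ HasInducedCycleOn G n

/-! A β-acyclic hypergraph has a weakly simplicial vertex outside any edge `g` that misses some
vertex. If an edge contains every vertex, discard it. Otherwise the maximal edges form an
α-acyclic family with at least two members, and α-acyclic families with two or more edges have
two ears; so there is a maximal edge `m`, not containing `g`, whose intersections with the other
maximal edges all lie in one of them, `m'`. A vertex of `m \ m'` lies only in edges inside `m`,
so a weakly simplicial vertex of the trace of the hypergraph on `m` avoiding `m ∩ m'` (found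
recursively: the trace has fewer vertices and is again β-acyclic) is weakly simplicial in the
whole hypergraph. Since deleting a vertex preserves β-acyclicity, such vertices can be deleted
one at a time. -/

variable {H K : Finset (Finset V)}

theorem AlphaAcyclic.image_filter (p : V → Prop) [DecidablePred p] (hK : AlphaAcyclic K) :
    AlphaAcyclic (K.image (·.filter p)) := by
  induction hK with
  | empty => exact AlphaAcyclic.empty
  | removeEdge K e he hcov _ ih =>
    have hK : K.image (·.filter p) = insert (e.filter p) ((K.erase e).image (·.filter p)) := by
      rw [← image_insert, insert_erase he]
    by_cases hmem : e.filter p ∈ (K.erase e).image (·.filter p)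
    · rwa [hK, insert_eq_of_mem hmem]
    refine AlphaAcyclic.removeEdge _ (e.filter p) (mem_image_of_mem _ he) ?_ ?_
    · rcases hcov with rfl | ⟨f, hf, hfe, hef⟩
      · exact Or.inl (filter_empty p)
      have hf' : f.filter p ∈ (K.erase e).image (·.filter p) :=
        mem_image_of_mem _ (mem_erase.2 ⟨hfe, hf⟩)
      exact Or.inr ⟨f.filter p, mem_image_of_mem _ hf, ne_of_mem_of_not_mem hf' hmem,
        filter_subset_filter p hef⟩
    · rwa [hK, erase_insert hmem]
  | removeVertex K v hv _ ih =>
    refine AlphaAcyclic.removeVertex _ v ?_ ?_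
    · refine le_trans (card_le_card (t := (K.filter (v ∈ ·)).image (·.filter p)) ?_)
        (card_image_le.trans hv)
      intro e he
      obtain ⟨he, hve⟩ := mem_filter.1 he
      obtain ⟨f, hf, rfl⟩ := mem_image.1 he
      exact mem_image_of_mem _ (mem_filter.2 ⟨hf, (mem_filter.1 hve).1⟩)
    · simpa only [image_image, Function.comp_def, filter_erase] using ih

theorem BetaAcyclic.image_filter (p : V → Prop) [DecidablePred p] (hH : BetaAcyclic H) :
    BetaAcyclic (H.image (·.filter p)) := by
  intro K hK
  have hK' : K = (H.filter (·.filter p ∈ K)).image (·.filter p) := by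
    ext e
    simp only [mem_image, mem_filter]
    constructor
    · intro he
      obtain ⟨f, hf, rfl⟩ := mem_image.1 (hK he)
      exact ⟨f, ⟨hf, he⟩, rfl⟩
    · rintro ⟨f, ⟨-, hf⟩, rfl⟩
      exact hf
  rw [hK']
  exact (hH _ (filter_subset _ _)).image_filter p

def IsEar (K : Finset (Finset V)) (m : Finset V) : Prop :=
  m ∈ K ∧ ∃ m' ∈ K, m' ≠ m ∧ ∀ e ∈ K, e ≠ m → m ∩ e ⊆ m'

theorem isEar_of_subset {m m' : Finset V} (hm : m ∈ K) (hm' : m' ∈ K) (hne : m' ≠ m)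
    (h : m ⊆ m') : IsEar K m :=
  ⟨hm, m', hm', hne, fun _ _ _ => inter_subset_left.trans h⟩

theorem AlphaAcyclic.exists_isEar_ne (hK : AlphaAcyclic K) :
    2 ≤ K.card → ∀ g, ∃ m, IsEar K m ∧ m ≠ g := by
  induction hK with
  | empty => simp
  | removeEdge K e he hcov _ ih =>
    intro hcard g
    obtain ⟨f, hf, hfe, hef⟩ : ∃ f ∈ K, f ≠ e ∧ e ⊆ f := by
      rcases hcov with rfl | h
      · obtain ⟨f, hf, hfe⟩ := exists_mem_ne hcard ∅
        exact ⟨f, hf, hfe, empty_subset f⟩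
      · exact h
    obtain hge | hge := ne_or_eq e g
    · exact ⟨e, isEar_of_subset he hf hfe hef, hge⟩
    subst hge
    have hfK : f ∈ K.erase e := mem_erase.2 ⟨hfe, hf⟩
    by_cases hcard' : 2 ≤ (K.erase e).card
    · obtain ⟨a, ⟨haK, a', ha', ha'a, hsub⟩, haf⟩ := ih hcard' f
      refine ⟨a, ⟨mem_of_mem_erase haK, a', mem_of_mem_erase ha', ha'a, fun x hx hxa => ?_⟩,
        ne_of_mem_erase haK⟩
      obtain rfl | hxe := eq_or_ne x e
      · exact (inter_subset_inter_left hef).trans (hsub f hfK haf.symm)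
      · exact hsub x (mem_erase.2 ⟨hxe, hx⟩) hxa
    · have hKf : K.erase e = {f} :=
        eq_singleton_iff_unique_mem.2 ⟨hfK, fun y hy => card_le_one.1 (by omega) y hy f hfK⟩
      refine ⟨f, ⟨hf, e, he, hfe.symm, fun y hy hyf => ?_⟩, hfe⟩
      obtain rfl : y = e := by
        by_contra hyx
        exact hyf (mem_singleton.1 (hKf ▸ mem_erase.2 ⟨hyx, hy⟩))
      exact inter_subset_right
  | removeVertex K v hv _ ih =>
    intro hcard g
    have huniq : ∀ a ∈ K, ∀ b ∈ K, v ∈ a → v ∈ b → a = b := fun a ha b hb hva hvb =>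
      card_le_one.1 hv a (mem_filter.2 ⟨ha, hva⟩) b (mem_filter.2 ⟨hb, hvb⟩)
    by_cases hinj : Set.InjOn (fun e : Finset V => e.erase v) K
    · obtain ⟨a', ⟨ha', b', hb', hba, hsub⟩, hag⟩ :=
        ih (by rwa [card_image_of_injOn hinj]) (g.erase v)
      obtain ⟨a, ha, rfl⟩ := mem_image.1 ha'
      obtain ⟨b, hb, rfl⟩ := mem_image.1 hb'
      refine ⟨a, ⟨ha, b, hb, fun h => hba (h ▸ rfl), fun x hx hxa y hy => ?_⟩,
        fun h => hag (h ▸ rfl)⟩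
      obtain ⟨hya, hyx⟩ := mem_inter.1 hy
      have hyv : y ≠ v := by
        rintro rfl
        exact hxa (huniq x hx a ha hyx hya)
      refine mem_of_mem_erase (hsub _ (mem_image_of_mem _ hx) (fun h => hxa (hinj hx ha h)) ?_)
      exact mem_inter.2 ⟨mem_erase.2 ⟨hyv, hya⟩, mem_erase.2 ⟨hyv, hyx⟩⟩
    -- erasing `v` merges an edge `a ∋ v` with the edge `b = a.erase v`, and both are ears
    obtain ⟨a, ha, b, hb, hab, hne⟩ : ∃ a ∈ K, ∃ b ∈ K, a.erase v = b.erase v ∧ a ≠ b := by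
      simpa [Set.InjOn] using hinj
    wlog hva : v ∈ a generalizing a b
    · refine this b hb a ha hab.symm hne.symm ?_
      by_contra hvb
      exact hne (by rwa [erase_eq_of_notMem hva, erase_eq_of_notMem hvb] at hab)
    have hvb : v ∉ b := fun hvb => hne (huniq a ha b hb hva hvb)
    have hba : b = a.erase v := by rw [hab, erase_eq_of_notMem hvb]
    have hearb : IsEar K b := isEar_of_subset hb ha hne (hba ▸ erase_subset v a)
    have heara : IsEar K a := by
      refine ⟨ha, b, hb, hne.symm, fun x hx hxa y hy => ?_⟩
      obtain ⟨hya, hyx⟩ := mem_inter.1 hy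
      rw [hba]
      refine mem_erase.2 ⟨?_, hya⟩
      rintro rfl
      exact hxa (huniq x hx a ha hyx hva)
    obtain rfl | hag := eq_or_ne a g
    · exact ⟨b, hearb, hne.symm⟩
    · exact ⟨a, heara, hag⟩

theorem wsVertex_of_forall_eq {v : V} {u : Finset V} (h : ∀ e ∈ H, v ∈ e → e = u) :
    wsVertex v H := by
  intro e he f hf hve hvf
  rw [h e he hve, h f hf hvf]
  exact Or.inl subset_rfl

theorem wsVertex_of_erase_of_sup_subset {v : V} {u : Finset V} (hu : u ∈ H)
    (huniv : H.sup id ⊆ u) (h : wsVertex v (H.erase u)) : wsVertex v H := by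
  intro e he f hf hve hvf
  obtain rfl | heu := eq_or_ne e u
  · exact Or.inr ((le_sup (f := id) hf).trans huniv)
  obtain rfl | hfu := eq_or_ne f u
  · exact Or.inl ((le_sup (f := id) he).trans huniv)
  exact h e (mem_erase.2 ⟨heu, he⟩) f (mem_erase.2 ⟨hfu, hf⟩) hve hvf

theorem wsVertex_of_image_filter (p : V → Prop) [DecidablePred p] {v : V}
    (hp : ∀ e ∈ H, v ∈ e → ∀ y ∈ e, p y) (h : wsVertex v (H.image (·.filter p))) :
    wsVertex v H := by
  intro e he f hf hve hvf
  have key : ∀ e ∈ H, v ∈ e → e.filter p = e := fun e he hve => filter_true_of_mem (hp e he hve)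
  simpa only [key e he hve, key f hf hvf] using
    h _ (mem_image_of_mem _ he) _ (mem_image_of_mem _ hf) (by rwa [key e he hve])
      (by rwa [key f hf hvf])

theorem exists_wsVertex_of_erase {u g : Finset V} (hu : u ∈ H) (huniv : H.sup id ⊆ u)
    (hHg : ¬ H.sup id ⊆ g)
    (hrec : ¬ (H.erase u).sup id ⊆ g → ∃ v ∈ (H.erase u).sup id, v ∉ g ∧ wsVertex v (H.erase u)) :
    ∃ v ∈ H.sup id, v ∉ g ∧ wsVertex v H := by
  by_cases hH' : (H.erase u).sup id ⊆ g
  · obtain ⟨x, hx, hxg⟩ := not_subset.1 hHg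
    refine ⟨x, hx, hxg, wsVertex_of_forall_eq (u := u) fun e he hxe => ?_⟩
    by_contra heu
    exact hxg (hH' (mem_sup.2 ⟨e, mem_erase.2 ⟨heu, he⟩, hxe⟩))
  obtain ⟨v, hv, hvg, hws⟩ := hrec hH'
  exact ⟨v, sup_mono (f := id) (erase_subset u H) hv, hvg,
    wsVertex_of_erase_of_sup_subset hu huniv hws⟩

theorem BetaAcyclic.exists_maximal_ear {g : Finset V} (hH : BetaAcyclic H)
    (hg : Maximal (· ∈ H) g) (hHg : ¬ H.sup id ⊆ g) :
    ∃ m m', Maximal (· ∈ H) m ∧ Maximal (· ∈ H) m' ∧ m' ≠ m ∧ m ≠ g ∧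
      ∀ e ∈ H, ¬ e ⊆ m → m ∩ e ⊆ m' := by
  set M := H.filter fun m => ∀ f ∈ H, m ⊆ f → f = m
  have hmemM : ∀ {m}, m ∈ M ↔ Maximal (· ∈ H) m := fun {m} =>
    ⟨fun hm => ⟨(mem_filter.1 hm).1, fun f hf hmf => ((mem_filter.1 hm).2 f hf hmf).le⟩,
      fun hm => mem_filter.2 ⟨hm.1, fun _ hf hmf => hm.eq_of_ge hf hmf⟩⟩
  obtain ⟨y, hy, hyg⟩ := not_subset.1 hHg
  obtain ⟨e, he, hye⟩ := mem_sup.1 hy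
  obtain ⟨n, hen, hn⟩ := exists_le_maximal H he
  have hM : 2 ≤ M.card :=
    one_lt_card.2 ⟨n, hmemM.2 hn, g, hmemM.2 hg, fun hng => hyg (hng ▸ hen hye)⟩
  obtain ⟨m, ⟨hmM, m', hm'M, hm'm, hear⟩, hmg⟩ := (hH M (filter_subset _ _)).exists_isEar_ne hM g
  refine ⟨m, m', hmemM.1 hmM, hmemM.1 hm'M, hm'm, hmg, fun e he hem => ?_⟩
  obtain ⟨n, hen, hn⟩ := exists_le_maximal H he
  have hnm : n ≠ m := fun hnm => hem (hnm ▸ hen)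
  exact (inter_subset_inter_left hen).trans (hear n (hmemM.2 hn) hnm)

theorem BetaAcyclic.exists_wsVertex_not_mem {g : Finset V} (hH : BetaAcyclic H)
    (hg : g ∈ insert ∅ H) (hHg : ¬ H.sup id ⊆ g) : ∃ v ∈ H.sup id, v ∉ g ∧ wsVertex v H := by
  induction hn : (H.sup id).card + H.card using Nat.strong_induction_on generalizing H g with
  | _ n ih =>
  by_cases huniv : ∃ u ∈ H, H.sup id ⊆ u
  · obtain ⟨u, hu, huniv⟩ := huniv
    have hgu : g ≠ u := fun hgu => hHg (hgu ▸ huniv)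
    refine exists_wsVertex_of_erase hu huniv hHg fun hH' => ih _ ?_
      (fun K hK => hH K (hK.trans (erase_subset u H))) (by simpa [hgu] using hg) hH' rfl
    have := card_le_card (sup_mono (f := id) (erase_subset u H))
    have := card_erase_lt_of_mem hu
    omega
  obtain ⟨gmax, hggmax, hgmax⟩ : ∃ gmax, g ⊆ gmax ∧ Maximal (· ∈ H) gmax := by
    rcases mem_insert.1 hg with rfl | hg
    · obtain ⟨e, he⟩ : H.Nonempty := nonempty_of_ne_empty fun h => hHg (by simp [h])
      obtain ⟨gmax, -, hgmax⟩ := exists_le_maximal H he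
      exact ⟨gmax, empty_subset _, hgmax⟩
    · exact exists_le_maximal H hg
  obtain ⟨m, m', hm, hm', hm'm, hmg, hear⟩ :=
    hH.exists_maximal_ear hgmax fun h => huniv ⟨gmax, hgmax.1, h⟩
  set T := H.image (·.filter (· ∈ m))
  have hmT : m ∈ T := mem_image.2 ⟨m, hm.1, filter_true_of_mem fun _ h => h⟩
  have hTm : T.sup id ⊆ m := Finset.sup_le fun e he => by
    obtain ⟨f, -, rfl⟩ := mem_image.1 he
    exact fun y hy => (mem_filter.1 hy).2
  have hgmaxm : ¬ gmax ⊆ m := fun h => hmg (hgmax.eq_of_le hm.1 h).symm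
  have hlt : (T.sup id).card + T.card < n := by
    have := card_lt_card (Finset.ssubset_of_subset_of_ssubset hTm
      (ssubset_of_subset_not_subset (le_sup (f := id) hm.1)
        fun h => hgmaxm ((le_sup (f := id) hgmax.1).trans h)))
    have : T.card ≤ H.card := card_image_le
    omega
  have hTt : ¬ T.sup id ⊆ m'.filter (· ∈ m) := fun h =>
    hm'm (hm.eq_of_le hm'.1 (((le_sup (f := id) hmT).trans h).trans (filter_subset _ _))).symm
  obtain ⟨v, hv, hvt, hws⟩ := ih _ hlt (hH.image_filter (· ∈ m))
    (mem_insert_of_mem (mem_image_of_mem _ hm'.1)) hTt rfl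
  have hvm : v ∈ m := hTm hv
  have hvm' : v ∉ m' := fun h => hvt (mem_filter.2 ⟨h, hvm⟩)
  have hsub : ∀ e ∈ H, v ∈ e → e ⊆ m := fun e he hve => by
    by_contra hem
    exact hvm' (hear e he hem (mem_inter.2 ⟨hvm, hve⟩))
  refine ⟨v, le_sup (f := id) hm.1 hvm, fun hvg => hvm' ?_, wsVertex_of_image_filter _ hsub hws⟩
  exact hear gmax hgmax.1 hgmaxm (mem_inter.2 ⟨hvm, hggmax hvg⟩)

theorem BetaAcyclic.wsReducible (hH : BetaAcyclic H) : WSReducible H := by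
  induction hn : (H.sup id).card using Nat.strong_induction_on generalizing H with
  | _ n ih =>
  by_cases hempty : ∀ e ∈ H, e = ∅
  · exact WSReducible.base H hempty
  have hne : ¬ H.sup id ⊆ ∅ := fun h => hempty fun e he =>
    subset_empty.1 ((le_sup (f := id) he).trans h)
  obtain ⟨v, hv, -, hws⟩ := hH.exists_wsVertex_not_mem (mem_insert_self ∅ H) hne
  refine WSReducible.step H v hv hws (ih _ ?_ ?_ rfl)
  · have hsub : (H.image (·.erase v)).sup id ⊆ (H.sup id).erase v := Finset.sup_le fun e he => by
      obtain ⟨f, hf, rfl⟩ := mem_image.1 he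
      exact erase_subset_erase v (le_sup (f := id) hf)
    have := card_le_card hsub
    have := card_erase_lt_of_mem hv
    omega
  · simpa only [filter_ne'] using hH.image_filter (· ≠ v)

/-- every β-acyclic CNF formula admits a weakly simplicial elimination
ordering of its variables, i.e., its hypergraph can be reduced to the empty hypergraph
by repeatedly deleting weakly simplicial vertices. -/
theorem betaAcyclic_wsReducible {V : Type} [DecidableEq V] (F : CNF V)
    (h : BetaAcyclic (hypergraphOf F)) :
    WSReducible (hypergraphOf F) :=
  h.wsReducible
end

section
/- For every n ≥ 3, the CNF formula F_c(n) with clauses {x_i, ¬x_{i+1}} for 1 ≤ i ≤ n−1 and {x_n, ¬x_1} has no DP-simplicial variable; consequently F_c(n) admits no DP-simplicial elimination ordering. -/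
open Finset

variable {V : Type} [DecidableEq V]

/-- The cyclic 2-CNF formula `F_c(n)` with clauses `{x_i, ¬x_{i+1}}` (indices mod `n`). -/
def Fc (n : ℕ) : CNF ℕ :=
  (Finset.range n).image fun i =>
    ({((i : ℕ), true), (((i + 1) % n : ℕ), false)} : Clause ℕ)

/-- for `n ≥ 3`, `F_c(n)` has no DP-simplicial variable, and hence
admits no DP-simplicial elimination ordering. -/
theorem Fc_no_dpSimplicial (n : ℕ) (hn : 3 ≤ n) :
    (∀ x ∈ fvars (Fc n), ¬ DPSimplicial x (Fc n)) ∧ ¬ HasDPSElimOrdering (Fc n) := by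
  have npos : 0 < n := by omega
  have hmemFc : ∀ i, i < n →
      ({((i : ℕ), true), (((i + 1) % n : ℕ), false)} : Clause ℕ) ∈ Fc n := by
    intro i hi
    exact Finset.mem_image.2 ⟨i, Finset.mem_range.2 hi, rfl⟩
  have hfvars_lt : ∀ x ∈ fvars (Fc n), x < n := by
    intro x hx
    rcases Finset.mem_sup.1 hx with ⟨C, hC, hxC⟩
    rcases Finset.mem_image.1 hC with ⟨i, hi, rfl⟩
    rcases Finset.mem_image.1 hxC with ⟨l, hl, rfl⟩
    have hi' : i < n := Finset.mem_range.1 hi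
    rcases Finset.mem_insert.1 hl with h | h
    · subst h; exact hi'
    · rw [Finset.mem_singleton.1 h]
      exact Nat.mod_lt _ npos
  have main : ∀ x ∈ fvars (Fc n), ¬ DPSimplicial x (Fc n) := by
    intro x hx hsimp
    have hxn : x < n := hfvars_lt x hx
    set y := (x + 1) % n with hy
    set j := (x + (n - 1)) % n with hj
    have hyn : y < n := Nat.mod_lt _ npos
    have hjn : j < n := Nat.mod_lt _ npos
    have hjy : (j + 1) % n = x := by
      rw [hj, Nat.mod_add_mod]
      have h1 : x + (n - 1) + 1 = x + n := by omega
      rw [h1, Nat.add_mod_right, Nat.mod_eq_of_lt hxn]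
    have hyval : y = if x + 1 = n then 0 else x + 1 := by
      rw [hy]; split
      · rename_i h; rw [h, Nat.mod_self]
      · exact Nat.mod_eq_of_lt (by omega)
    have hjval : j = if x = 0 then n - 1 else x - 1 := by
      rw [hj]; split
      · rename_i h; rw [h, Nat.zero_add]
        exact Nat.mod_eq_of_lt (by omega)
      · rename_i h
        have h1 : x + (n - 1) = (x - 1) + n := by omega
        rw [h1, Nat.add_mod_right]
        exact Nat.mod_eq_of_lt (by omega)
    have hyx : y ≠ x := by rw [hyval]; split <;> omega
    have hjx : j ≠ x := by rw [hjval]; split <;> omega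
    have hyj : y ≠ j := by rw [hyval, hjval]; split <;> split <;> omega
    set C : Clause ℕ := {((x : ℕ), true), ((y : ℕ), false)} with hCdef
    set D : Clause ℕ := {((j : ℕ), true), ((x : ℕ), false)} with hDdef
    have hC : C ∈ Fc n := by
      have := hmemFc x hxn
      rwa [← hy, ← hCdef] at this
    have hD : D ∈ Fc n := by
      have := hmemFc j hjn
      rwa [hjy, ← hDdef] at this
    have himg : D.image negLit = ({((j : ℕ), false), ((x : ℕ), true)} : Clause ℕ) := by
      rw [hDdef]
      simp [Finset.image_insert, negLit]
    have hres : C ∩ D.image negLit = ({((x : ℕ), true)} : Clause ℕ) := by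
      rw [himg, hCdef]
      ext ⟨a, b⟩
      simp only [Finset.mem_inter, Finset.mem_insert, Finset.mem_singleton, Prod.mk.injEq]
      constructor
      · rintro ⟨(⟨rfl, rfl⟩ | ⟨rfl, rfl⟩), hB⟩
        · exact ⟨rfl, rfl⟩
        · rcases hB with ⟨h, _⟩ | ⟨_, h⟩
          · exact absurd h hyj
          · exact absurd h (by simp)
      · rintro ⟨rfl, rfl⟩
        exact ⟨Or.inl ⟨rfl, rfl⟩, Or.inr ⟨rfl, rfl⟩⟩
    set R : Clause ℕ :=
      (C ∪ D) \ ({((x : ℕ), true), ((x : ℕ), false)} : Clause ℕ) with hRdef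
    have hR : IsResolventOn x C D R := ⟨hres, rfl⟩
    have hjR : ((j : ℕ), true) ∈ R := by
      rw [hRdef]
      rw [Finset.mem_sdiff]
      constructor
      · exact Finset.mem_union_right _ (Finset.mem_insert_self _ _)
      · simp only [Finset.mem_insert, Finset.mem_singleton, Prod.mk.injEq, not_or]
        exact ⟨fun h => hjx h.1, fun h => by simpa using h.2⟩
    have hyR : ((y : ℕ), false) ∈ R := by
      rw [hRdef, Finset.mem_sdiff]
      constructor
      · exact Finset.mem_union_left _ (Finset.mem_insert_of_mem (Finset.mem_singleton_self _))
      · simp only [Finset.mem_insert, Finset.mem_singleton, Prod.mk.injEq, not_or]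
        exact ⟨fun h => by simpa using h.2, fun h => hyx h.1⟩
    rcases hsimp C hC D hD R hR with h | h
    · have := h hjR
      rw [hCdef] at this
      rcases Finset.mem_insert.1 this with h' | h'
      · exact hjx (congrArg Prod.fst h')
      · exact absurd (congrArg Prod.snd (Finset.mem_singleton.1 h')) (by simp)
    · have := h hyR
      rw [hDdef] at this
      rcases Finset.mem_insert.1 this with h' | h'
      · exact absurd (congrArg Prod.snd h') (by simp)
      · exact hyx (congrArg Prod.fst (Finset.mem_singleton.1 h'))
  refine ⟨main, ?_⟩
  rintro ⟨l, hl, hElim⟩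
  have h0 : (0 : ℕ) ∈ fvars (Fc n) := by
    refine Finset.mem_sup.2 ⟨_, hmemFc 0 npos, ?_⟩
    exact Finset.mem_image.2 ⟨((0 : ℕ), true), Finset.mem_insert_self _ _, rfl⟩
  cases l with
  | nil =>
    rw [← hl] at h0
    simp at h0
  | cons x xs =>
    have hxmem : x ∈ fvars (Fc n) := by
      rw [← hl]; simp
    exact main x hxmem hElim.1
end

section
/- For every n ≥ 3, the formula F_ac(n), consisting of the clauses {y_{j−1}, ¬y_j} ∪ C_j for 1 < j ≤ 2^n, the clause {y_{2^n}, ¬y_1} ∪ C_1, the clauses {y_j, y_{j+1}} ∪ C_j for 1 ≤ j ≤ 2^n (indices of y modulo 2^n), and {y_{2^n}, y_1} ∪ C_{2^n}, where C_1,…,C_{2^n} enumerate all clauses over x_1,…,x_n, is a hitting formula: any two distinct clauses C, C' of F_ac(n) satisfy C ∩ ¬C' ≠ ∅. -/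
open Finset

variable {V : Type} [DecidableEq V]

/-- The `j`-th full clause over variables `0, …, n-1` (signs given by binary digits of `j`). -/
def fullClause (n j : ℕ) : Clause ℕ :=
  (Finset.range n).image fun i => ((i : ℕ), j.testBit i)

/-- `F_ac(n)`: variables `x_i = i` (`i < n`) and `y_j = n + j` (`j < 2^n`); clauses
`{y_{j−1}, ¬y_j} ∪ C_j` and `{y_j, y_{j+1}} ∪ C_j` for all `j` (indices of `y` mod `2^n`),
where `C_0, …, C_{2^n−1}` enumerate all clauses over `x_0, …, x_{n−1}`. -/
def Fac (n : ℕ) : CNF ℕ :=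
  ((Finset.range (2 ^ n)).image fun j =>
      insert ((n + (j + 2 ^ n - 1) % 2 ^ n : ℕ), true)
        (insert ((n + j : ℕ), false) (fullClause n j))) ∪
    ((Finset.range (2 ^ n)).image fun j =>
      insert ((n + j : ℕ), true)
        (insert ((n + (j + 1) % 2 ^ n : ℕ), true) (fullClause n j)))

/-! Any two clauses of `F_ac(n)` with different indices `j ≠ j'` already clash on the full
clauses `C_j` and `C_{j'}`, which differ in the sign of some `x_i`. The two clauses with the
same index `j` clash on `y_j`, which is negated in the first and positive in the second. -/

section Hitting

variable {α : Type}

def Clash (C D : Clause α) : Prop := ∃ l ∈ C, negLit l ∈ D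

def IsHitting (F : CNF α) : Prop := ∀ C ∈ F, ∀ D ∈ F, C ≠ D → Clash C D

@[simp]
lemma negLit_negLit (l : α × Bool) : negLit (negLit l) = l := by
  simp [negLit]

lemma Clash.symm {C D : Clause α} (h : Clash C D) : Clash D C := by
  obtain ⟨l, hlC, hlD⟩ := h
  exact ⟨negLit l, hlD, by rwa [negLit_negLit]⟩

lemma Clash.mono {C C' D D' : Clause α} (h : Clash C D) (hC : C ⊆ C') (hD : D ⊆ D') :
    Clash C' D' := by
  obtain ⟨l, hlC, hlD⟩ := h
  exact ⟨l, hC hlC, hD hlD⟩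

lemma isHitting_image_union_image [DecidableEq α] {ι : Type} {s : Finset ι}
    {core f g : ι → Clause α} (hcore : ∀ i ∈ s, ∀ j ∈ s, i ≠ j → Clash (core i) (core j))
    (hf : ∀ i, core i ⊆ f i) (hg : ∀ i, core i ⊆ g i) (hfg : ∀ i, Clash (f i) (g i)) :
    IsHitting (s.image f ∪ s.image g) := by
  have hcover : ∀ C ∈ s.image f ∪ s.image g, ∃ i ∈ s, core i ⊆ C ∧ (C = f i ∨ C = g i) := by
    simp only [mem_union, mem_image]
    rintro C (⟨i, hi, rfl⟩ | ⟨i, hi, rfl⟩)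
    exacts [⟨i, hi, hf i, .inl rfl⟩, ⟨i, hi, hg i, .inr rfl⟩]
  intro C hC D hD hCD
  obtain ⟨i, hi, hiC, hCi⟩ := hcover C hC
  obtain ⟨j, hj, hjD, hDj⟩ := hcover D hD
  by_cases hij : i = j
  · subst hij
    rcases hCi with rfl | rfl <;> rcases hDj with rfl | rfl
    exacts [absurd rfl hCD, hfg i, (hfg i).symm, absurd rfl hCD]
  · exact (hcore i hi j hj hij).mono hiC hjD

end Hitting

lemma exists_lt_testBit_ne {n j j' : ℕ} (hj : j < 2 ^ n) (hj' : j' < 2 ^ n) (h : j ≠ j') :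
    ∃ i < n, j.testBit i ≠ j'.testBit i := by
  obtain ⟨i, hi⟩ : ∃ i, j.testBit i ≠ j'.testBit i := by
    by_contra! hbits
    exact h (Nat.eq_of_testBit_eq hbits)
  refine ⟨i, ?_, hi⟩
  by_contra! hni
  have hpow : 2 ^ n ≤ 2 ^ i := Nat.pow_le_pow_right two_pos hni
  rw [Nat.testBit_lt_two_pow (hj.trans_le hpow), Nat.testBit_lt_two_pow (hj'.trans_le hpow)] at hi
  exact hi rfl

lemma fullClause_clash {n j j' : ℕ} (hj : j < 2 ^ n) (hj' : j' < 2 ^ n) (h : j ≠ j') :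
    Clash (fullClause n j) (fullClause n j') := by
  obtain ⟨i, hin, hi⟩ := exists_lt_testBit_ne hj hj' h
  have hneg : negLit (i, j.testBit i) = (i, j'.testBit i) := by
    simp only [negLit, (Bool.eq_not.mpr hi.symm).symm]
  refine ⟨(i, j.testBit i), ?_, ?_⟩
  · exact mem_image_of_mem _ (mem_range.mpr hin)
  · rw [hneg]
    exact mem_image_of_mem _ (mem_range.mpr hin)

theorem Fac_hitting_general (n : ℕ) :
    ∀ C ∈ Fac n, ∀ D ∈ Fac n, C ≠ D → ∃ l ∈ C, negLit l ∈ D :=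
  isHitting_image_union_image (core := fullClause n)
    (fun _ hi _ hj hij => fullClause_clash (mem_range.mp hi) (mem_range.mp hj) hij)
    (fun _ => (subset_insert _ _).trans (subset_insert _ _))
    (fun _ => (subset_insert _ _).trans (subset_insert _ _))
    (fun j => ⟨((n + j : ℕ), false), by simp, by simp [negLit]⟩)

/-- for `n ≥ 3`, `F_ac(n)` is a hitting formula: any two distinct
clauses clash. -/
theorem Fac_hitting (n : ℕ) (hn : 3 ≤ n) :
    ∀ C ∈ Fac n, ∀ D ∈ Fac n, C ≠ D → ∃ l ∈ C, negLit l ∈ D :=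
  Fac_hitting_general n
end

section
/- Let x_1,…,x_m and z_1,…,z_{m−1} be distinct variables, and let F^{=1} be the union of F(z_1,x_1,x_2), F(z_i, z_{i−1}, x_{i+1}) for 2 ≤ i ≤ m−1, and the unit clause {z_{m−1}}, where F(z,a,b) is the gadget enforcing z = a + b with at most one of a, b true. Then every satisfying assignment of F^{=1} sets exactly one of x_1,…,x_m to true, and conversely for each 1 ≤ i ≤ m there is a satisfying assignment setting x_i to true and all other x_j to false. -/
open Finset

variable {V : Type} [DecidableEq V]

/-- The gadget formula `F(z,a,b)` enforcing `z = a + b` with at most one of `a,b` true. -/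
def Fgadget {V : Type} [DecidableEq V] (z a b : V) : CNF V :=
  { {(z, true), (a, true), (b, false)},
    {(z, true), (a, false), (b, true)},
    {(z, true), (a, false), (b, false)},
    {(z, false), (a, true), (b, true)},
    {(z, false), (a, false), (b, false)} }

/-- The selection formula `F^{=1}(x_1,…,x_m; z_1,…,z_{m−1})`. -/
def Fone {V : Type} [DecidableEq V] (m : ℕ) (x z : ℕ → V) : CNF V :=
  Fgadget (z 1) (x 1) (x 2) ∪
    (Finset.Icc 2 (m - 1)).biUnion (fun i => Fgadget (z i) (z (i - 1)) (x (i + 1))) ∪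
    {({(z (m - 1), true)} : Clause V)}


lemma satGadget (τ : ℕ → Bool) (z a b : ℕ) :
    satCNF τ (Fgadget z a b) ↔
      ((τ z = false ∧ τ a = false ∧ τ b = false) ∨
       (τ z = true ∧ τ a = false ∧ τ b = true) ∨
       (τ z = true ∧ τ a = true ∧ τ b = false)) := by
  simp only [Fgadget, satCNF, satClause, Finset.mem_insert, Finset.mem_singleton,
    forall_eq_or_imp, forall_eq]
  constructor
  · rintro ⟨h1, h2, h3, h4, h5⟩
    cases hz : τ z <;> cases ha : τ a <;> cases hb : τ b <;> simp_all
  · rintro (⟨hz, ha, hb⟩ | ⟨hz, ha, hb⟩ | ⟨hz, ha, hb⟩) <;> simp_all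

lemma satFone_iff (m : ℕ) (x z : ℕ → ℕ) (τ : ℕ → Bool) :
    satCNF τ (Fone m x z) ↔
      satCNF τ (Fgadget (z 1) (x 1) (x 2)) ∧
      (∀ i ∈ Finset.Icc 2 (m - 1), satCNF τ (Fgadget (z i) (z (i - 1)) (x (i + 1)))) ∧
      τ (z (m - 1)) = true := by
  simp only [Fone, satCNF, Finset.mem_union, Finset.mem_biUnion, Finset.mem_singleton]
  constructor
  · intro h
    refine ⟨fun C hC => h C (Or.inl (Or.inl hC)), fun i hi C hC => h C (Or.inl (Or.inr ⟨i, hi, hC⟩)), ?_⟩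
    have := h _ (Or.inr rfl)
    simpa [satClause] using this
  · rintro ⟨h1, h2, h3⟩ C (⟨hC | ⟨i, hi, hC⟩⟩ | rfl)
    · exact h1 C hC
    · exact h2 i hi C hC
    · exact ⟨(z (m-1), true), Finset.mem_singleton_self _, h3⟩

/-- for distinct variables `x_1,…,x_m, z_1,…,z_{m−1}` (`m ≥ 2`), every
satisfying assignment of `F^{=1}` sets exactly one of `x_1,…,x_m` to true, and for each
`i` there is a satisfying assignment setting `x_i` to true and all other `x_j` to false. -/
theorem Fone_selection (m : ℕ) (hm : 2 ≤ m) (x z : ℕ → ℕ)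
    (hx : ∀ i ∈ Finset.Icc 1 m, ∀ j ∈ Finset.Icc 1 m, x i = x j → i = j)
    (hz : ∀ i ∈ Finset.Icc 1 (m - 1), ∀ j ∈ Finset.Icc 1 (m - 1), z i = z j → i = j)
    (hxz : ∀ i ∈ Finset.Icc 1 m, ∀ j ∈ Finset.Icc 1 (m - 1), x i ≠ z j) :
    (∀ τ : ℕ → Bool, satCNF τ (Fone m x z) →
        ∃! i, i ∈ Finset.Icc 1 m ∧ τ (x i) = true) ∧
      ∀ i ∈ Finset.Icc 1 m, ∃ τ : ℕ → Bool, satCNF τ (Fone m x z) ∧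
        τ (x i) = true ∧ ∀ j ∈ Finset.Icc 1 m, j ≠ i → τ (x j) = false := by
  constructor
  · -- Part 1: every satisfying assignment sets exactly one x_i true
    intro τ hτ
    rw [satFone_iff] at hτ
    obtain ⟨h1, h2, h3⟩ := hτ
    rw [satGadget] at h1
    have key : ∀ i, 1 ≤ i → i ≤ m - 1 →
        ((Finset.Icc 1 (i+1)).filter (fun j => τ (x j) = true)).card
          = if τ (z i) = true then 1 else 0 := by
      intro i hi
      induction i, hi using Nat.le_induction with
      | base =>
        intro _
        have h12 : Finset.Icc 1 (1+1) = ({1, 2} : Finset ℕ) := by decide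
        rcases h1 with ⟨hz, ha, hb⟩ | ⟨hz, ha, hb⟩ | ⟨hz, ha, hb⟩ <;>
          simp [h12, Finset.filter_insert, Finset.filter_singleton, ha, hb, hz]
      | succ n hn ih =>
        intro hle
        have ihc := ih (by omega)
        have h2' := h2 (n+1) (Finset.mem_Icc.mpr ⟨by omega, by omega⟩)
        rw [satGadget] at h2'
        simp only [Nat.add_sub_cancel] at h2'
        have hins : Finset.Icc 1 (n+1+1) = insert (n+1+1) (Finset.Icc 1 (n+1)) := by
          ext t
          simp only [Finset.mem_Icc, Finset.mem_insert]
          omega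
        have hnot : (n+1+1) ∉ (Finset.Icc 1 (n+1)).filter (fun j => τ (x j) = true) := by
          simp [Finset.mem_Icc]
        rcases h2' with ⟨hz', hzn, hx'⟩ | ⟨hz', hzn, hx'⟩ | ⟨hz', hzn, hx'⟩
        · rw [hins, Finset.filter_insert, if_neg (by simp [hx']), hz']
          simpa [hzn] using ihc
        · rw [hins, Finset.filter_insert, if_pos hx', hz',
            Finset.card_insert_of_notMem hnot]
          simpa [hzn] using ihc
        · rw [hins, Finset.filter_insert, if_neg (by simp [hx']), hz']
          simpa [hzn] using ihc
    have hcard : ((Finset.Icc 1 m).filter (fun j => τ (x j) = true)).card = 1 := by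
      have hk := key (m-1) (by omega) le_rfl
      have hmm : m - 1 + 1 = m := by omega
      rw [hmm] at hk
      rw [hk, if_pos h3]
    obtain ⟨a, ha⟩ := Finset.card_eq_one.mp hcard
    have hamem : a ∈ (Finset.Icc 1 m).filter (fun j => τ (x j) = true) := by
      rw [ha]; exact Finset.mem_singleton_self a
    rw [Finset.mem_filter] at hamem
    refine ⟨a, ⟨hamem.1, hamem.2⟩, ?_⟩
    intro b hb
    have : b ∈ (Finset.Icc 1 m).filter (fun j => τ (x j) = true) :=
      Finset.mem_filter.mpr ⟨hb.1, hb.2⟩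
    rw [ha, Finset.mem_singleton] at this
    exact this
  · -- Part 2: for each i there is a satisfying assignment
    intro i hi
    rw [Finset.mem_Icc] at hi
    set τ : ℕ → Bool :=
      fun v => decide (v = x i ∨ v ∈ (Finset.Icc (max (i-1) 1) (m-1)).image z) with hτ
    have hxk : ∀ k, 1 ≤ k → k ≤ m → (τ (x k) = true ↔ k = i) := by
      intro k hk1 hk2
      simp only [hτ, decide_eq_true_eq, Finset.mem_image]
      constructor
      · rintro (h | ⟨j, hj, h⟩)
        · exact hx k (Finset.mem_Icc.mpr ⟨hk1, hk2⟩) i (Finset.mem_Icc.mpr hi) h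
        · rw [Finset.mem_Icc] at hj
          exact absurd h.symm (hxz k (Finset.mem_Icc.mpr ⟨hk1, hk2⟩) j
            (Finset.mem_Icc.mpr ⟨by omega, hj.2⟩))
      · rintro rfl; exact Or.inl rfl
    have hzj : ∀ j, 1 ≤ j → j ≤ m - 1 → (τ (z j) = true ↔ i - 1 ≤ j) := by
      intro j hj1 hj2
      simp only [hτ, decide_eq_true_eq, Finset.mem_image]
      constructor
      · rintro (h | ⟨j', hj', h⟩)
        · exact absurd h.symm (hxz i (Finset.mem_Icc.mpr hi) j (Finset.mem_Icc.mpr ⟨hj1, hj2⟩))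
        · rw [Finset.mem_Icc] at hj'
          have := hz j (Finset.mem_Icc.mpr ⟨hj1, hj2⟩) j'
            (Finset.mem_Icc.mpr ⟨by omega, hj'.2⟩) h.symm
          omega
      · intro h
        exact Or.inr ⟨j, Finset.mem_Icc.mpr ⟨by omega, by omega⟩, rfl⟩
    refine ⟨τ, ?_, (hxk i hi.1 hi.2).mpr rfl, ?_⟩
    · rw [satFone_iff]
      refine ⟨?_, ?_, (hzj (m-1) (by omega) le_rfl).mpr (by omega)⟩
      · rw [satGadget]
        have b1 := hxk 1 le_rfl (by omega)
        have b2 := hxk 2 (by omega) hm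
        have bz := hzj 1 le_rfl (by omega)
        simp only [Bool.eq_false_iff, Ne, b1, b2, bz]
        omega
      · intro k hk
        rw [Finset.mem_Icc] at hk
        rw [satGadget]
        have bz1 := hzj k (by omega) hk.2
        have bz2 := hzj (k-1) (by omega) (by omega)
        have bx := hxk (k+1) (by omega) (by omega)
        simp only [Bool.eq_false_iff, Ne, bz1, bz2, bx]
        omega
    · intro j hj hne
      rw [Finset.mem_Icc] at hj
      exact Bool.eq_false_iff.mpr (fun h => hne ((hxk j hj.1 hj.2).mp h))
end
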